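/- arXiv:1306.4711 — 2 statements merged into one kernel-verified Lean document; each statement's English description precedes it below -/
import Mathlib

section
/- Suppose a group H acts on sets X₁, …, X_M and that x_m ∈ X_m are points whose stabilizers in H each have infinite index. Then there is an infinite sequence g₁, g₂, … ∈ H such that for all 1 ≤ m ≤ M and all k ≠ l ≥ 1 we have g_k(x_m) ≠ g_l(x_m). -/
/-!
Choose the `g k` greedily. Once `g 0, …, g (n-1)` are fixed, the elements `a` with
`a • x m = g k • x m` for some `m` and `k < n` form the finite union of the left cosets
`g k • stabilizer H (x m)`. By B. H. Neumann's lemma such a union of cosets of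
infinite-index subgroups is never all of `H`, so `g n` can be taken outside it.
-/

open scoped Pointwise

namespace MulAction

variable {H : Type*} [Group H]

theorem smul_eq_smul_iff_mem_leftCoset_stabilizer {α : Type*} [MulAction H α] {a b : H}
    {x : α} : a • x = b • x ↔ a ∈ b • (stabilizer H x : Set H) := by
  rw [mem_leftCoset_iff, SetLike.mem_coe, mem_stabilizer_iff, mul_smul, inv_smul_eq_iff]

theorem exists_forall_smul_ne_of_not_finiteIndex {ι : Type*} [Finite ι] {X : ι → Type*}
    [∀ i, MulAction H (X i)] {x : ∀ i, X i} (hx : ∀ i, ¬ (stabilizer H (x i)).FiniteIndex)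
    (s : Finset H) : ∃ a : H, ∀ b ∈ s, ∀ i, b • x i ≠ a • x i := by
  have := Fintype.ofFinite ι
  by_contra! hcovered
  have hcover : ⋃ p ∈ s ×ˢ (Finset.univ : Finset ι),
      p.1 • (stabilizer H (x p.2) : Set H) = Set.univ := by
    refine Set.eq_univ_of_forall fun a => ?_
    obtain ⟨b, hb, i, hba⟩ := hcovered a
    exact Set.mem_biUnion (x := (b, i)) (Finset.mem_product.2 ⟨hb, Finset.mem_univ i⟩)
      (smul_eq_smul_iff_mem_leftCoset_stabilizer.1 hba.symm)
  obtain ⟨p, -, hp⟩ := Subgroup.exists_finiteIndex_of_leftCoset_cover hcover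
  exact hx p.2 hp

end MulAction

theorem stmt_1 {H : Type*} [Group H] (M : ℕ) (X : Fin M → Type*)
    [∀ m, MulAction H (X m)] (x : ∀ m, X m)
    (h : ∀ m, Infinite (H ⧸ MulAction.stabilizer H (x m))) :
    ∃ g : ℕ → H, ∀ (m : Fin M) (k l : ℕ), k ≠ l → g k • x m ≠ g l • x m := by
  have hx m : ¬ (MulAction.stabilizer H (x m)).FiniteIndex :=
    Subgroup.not_finiteIndex_iff.2 (Subgroup.index_eq_zero_iff_infinite.2 (h m))
  let r : H → H → Prop := fun a b => ∀ m, a • x m ≠ b • x m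
  have : Std.Symm r := ⟨fun _ _ hab m => (hab m).symm⟩
  obtain ⟨g, -, hg⟩ := exists_seq_of_forall_finset_exists' (fun _ => True) r fun s _ =>
    (MulAction.exists_forall_smul_ne_of_not_finiteIndex hx s).imp fun _ ha => ⟨trivial, ha⟩
  exact ⟨g, fun m _ _ hkl => hg hkl m⟩
end

section
/- Let G be a group acting on a set X, and let x₁, x₂ ∈ X be two points whose stabilizers in G both have infinite index. Then there exist a sequence g₁, g₂, … in G such that for all k ≠ l, g_k·x₁ ≠ g_l·x₁ and g_k·x₂ ≠ g_l·x₂. -/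
/-!
The elements `g` with `g • x = h • x` form the left coset `h • Stab(x)`. By B. H. Neumann's
lemma a group is never covered by finitely many cosets of infinite-index subgroups, so every
finite set of group elements can be avoided simultaneously at all the points `xᵢ`; choosing
such elements greedily produces the sequence.
-/

open scoped Pointwise

namespace MulAction

variable {G X : Type*} [Group G] [MulAction G X]

theorem smul_eq_smul_iff_mem_leftCoset_stabilizer_s11 {g h : G} {x : X} :
    g • x = h • x ↔ g ∈ h • (stabilizer G x : Set G) := by
  rw [Set.mem_smul_set_iff_inv_smul_mem, SetLike.mem_coe, mem_stabilizer_iff, smul_eq_mul,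
    mul_smul, inv_smul_eq_iff]

theorem exists_smul_ne_smul_of_infinite_quotient_stabilizer {ι : Type*} [Finite ι] (x : ι → X)
    (hx : ∀ i, Infinite (G ⧸ stabilizer G (x i))) (s : Finset G) :
    ∃ g : G, ∀ h ∈ s, ∀ i, g • x i ≠ h • x i := by
  classical
  have := Fintype.ofFinite ι
  by_contra! hcover
  have hcovers : ⋃ p ∈ s ×ˢ Finset.univ, p.1 • (stabilizer G (x p.2) : Set G) = Set.univ := by
    refine Set.eq_univ_of_forall fun g => ?_
    obtain ⟨h, hs, i, hi⟩ := hcover g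
    exact Set.mem_biUnion (x := (h, i)) (by simp [hs])
      (smul_eq_smul_iff_mem_leftCoset_stabilizer_s11.mp hi)
  obtain ⟨p, -, hp⟩ := Subgroup.exists_finiteIndex_of_leftCoset_cover hcovers
  exact not_finite (G ⧸ stabilizer G (x p.2))

theorem exists_seq_pairwise_smul_ne_of_infinite_quotient_stabilizer {ι : Type*} [Finite ι]
    (x : ι → X) (hx : ∀ i, Infinite (G ⧸ stabilizer G (x i))) :
    ∃ g : ℕ → G, Pairwise fun k l => ∀ i, g k • x i ≠ g l • x i := by
  let r : G → G → Prop := fun a b => ∀ i, a • x i ≠ b • x i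
  have : Std.Symm r := ⟨fun _ _ hab i => (hab i).symm⟩
  obtain ⟨g, -, hg⟩ := exists_seq_of_forall_finset_exists' (fun _ => True) r fun s _ =>
    (exists_smul_ne_smul_of_infinite_quotient_stabilizer x hx s).imp
      fun g hg => ⟨trivial, fun h hs i => (hg h hs i).symm⟩
  exact ⟨g, hg⟩

end MulAction

theorem stmt_11 {G X : Type*} [Group G] [MulAction G X] (x₁ x₂ : X)
    (h₁ : Infinite (G ⧸ MulAction.stabilizer G x₁))
    (h₂ : Infinite (G ⧸ MulAction.stabilizer G x₂)) :
    ∃ g : ℕ → G, ∀ k l : ℕ, k ≠ l →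
      g k • x₁ ≠ g l • x₁ ∧ g k • x₂ ≠ g l • x₂ := by
  obtain ⟨g, hg⟩ :=
    MulAction.exists_seq_pairwise_smul_ne_of_infinite_quotient_stabilizer ![x₁, x₂]
      (Fin.forall_fin_two.mpr ⟨h₁, h₂⟩)
  exact ⟨g, fun k l hkl => ⟨hg hkl 0, hg hkl 1⟩⟩
end
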